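/- Let F_q be a finite field of characteristic 2 with q = 2^n elements. Then the unit group U(F_q[QD_16]) is centrally metabelian; that is, its second derived subgroup U(F_q[QD_16])'' is contained in the center of U(F_q[QD_16]). -/

import Mathlib

/-- Relations for the quasidihedral group `QD_{2^k}`:
`a^(2^(k-1)) = 1`, `x^2 = 1`, `x * a * x = a^(2^(k-2)-1)`. -/
def qdRels (k : ℕ) : Set (FreeGroup (Fin 2)) :=
  {FreeGroup.of 0 ^ (2 ^ (k - 1)), FreeGroup.of 1 ^ 2,
    FreeGroup.of 1 * FreeGroup.of 0 * FreeGroup.of 1 * (FreeGroup.of 0 ^ (2 ^ (k - 2) - 1))⁻¹}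

/-- The quasidihedral group of order 16: `⟨a, x | a^8 = x^2 = 1, x a x = a^3⟩`. -/
def QD16 : Type := PresentedGroup (qdRels 4)

instance : Group QD16 := inferInstanceAs (Group (PresentedGroup (qdRels 4)))

/-!
Put `c = 1 + a²` in `R = F[QD₁₆]`. Then `R / cR ≅ F[QD₁₆ / ⟨a²⟩]` is commutative, `c² = 1 + a⁴` is
central, `c⁴ = 1 + a⁸ = 0` and `r c - c r ∈ c² R` for all `r`. Hence every commutator of units is
`≡ 1 mod c`, a commutator of two units `≡ 1 mod c` is `≡ 1 mod c³`, and `1 + c³ R` is central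
because `c³ [R, R] ⊆ c⁴ R = 0`.
-/

open scoped commutatorElement

section UnitsCommutator

variable {R : Type*} [Ring R]

theorem Units.val_commutatorElement_sub_one (p q : Rˣ) :
    ((⁅p, q⁆ : Rˣ) : R) - 1 = ((p : R) * q - q * p) * ↑p⁻¹ * ↑q⁻¹ := by
  rw [commutatorElement_def, sub_mul, sub_mul]
  simp only [Units.val_mul, mul_assoc, Units.mul_inv, mul_one]

def unitsCongrOne (c : R) (hc : ∀ r : R, c ∣ r * c) : Subgroup Rˣ where
  carrier := {u | c ∣ (u : R) - 1}
  one_mem' := by simp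
  mul_mem' {u v} hu hv := by
    have h : ((u * v : Rˣ) : R) - 1 = ((u : R) - 1) * v + ((v : R) - 1) := by
      rw [Units.val_mul]; noncomm_ring
    simpa only [Set.mem_ofPred_eq, h] using dvd_add (hu.mul_right _) hv
  inv_mem' {u} hu := by
    obtain ⟨t, ht⟩ := hu
    have h : ((u⁻¹ : Rˣ) : R) - 1 = -(↑u⁻¹ * c * t) := by
      rw [mul_assoc, ← ht, mul_sub, Units.inv_mul, mul_one, neg_sub]
    simpa only [Set.mem_ofPred_eq, h, dvd_neg] using (hc _).mul_right t

theorem dvd_mul_left_of_sq_dvd_mul_sub_mul {c : R} (hc : ∀ r : R, c ^ 2 ∣ r * c - c * r)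
    (r : R) : c ∣ r * c := by
  simpa using dvd_add ((dvd_pow_self c two_ne_zero).trans (hc r)) (dvd_mul_right c r)

variable {c : R}

theorem derivedSeries_one_le_unitsCongrOne (hc : ∀ r : R, c ∣ r * c)
    (hcomm : ∀ r s : R, c ∣ r * s - s * r) : derivedSeries Rˣ 1 ≤ unitsCongrOne c hc := by
  rw [derivedSeries_one, commutator_def, Subgroup.commutator_le]
  intro p _ q _
  change c ∣ ((⁅p, q⁆ : Rˣ) : R) - 1
  rw [Units.val_commutatorElement_sub_one, mul_assoc]
  exact (hcomm _ _).mul_right _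

theorem pow_three_dvd_commutatorElement_sub_one (hcomm : ∀ r s : R, c ∣ r * s - s * r)
    (hc : ∀ r : R, c ^ 2 ∣ r * c - c * r) {p q : Rˣ} (hp : c ∣ (p : R) - 1)
    (hq : c ∣ (q : R) - 1) : c ^ 3 ∣ ((⁅p, q⁆ : Rˣ) : R) - 1 := by
  obtain ⟨s, hs⟩ := hp
  obtain ⟨t, ht⟩ := hq
  have key : (p : R) * q - q * p =
      c * (s * c - c * s) * t - c * (t * c - c * t) * s + c * c * (s * t - t * s) := by
    rw [eq_add_of_sub_eq' hs, eq_add_of_sub_eq' ht]; noncomm_ring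
  rw [Units.val_commutatorElement_sub_one, key, mul_assoc]
  refine Dvd.dvd.mul_right (dvd_add (dvd_sub ?_ ?_) ?_) _
  · exact pow_succ' c 2 ▸ (mul_dvd_mul_left c (hc s)).mul_right t
  · exact pow_succ' c 2 ▸ (mul_dvd_mul_left c (hc t)).mul_right s
  · exact pow_three' c ▸ mul_dvd_mul_left (c * c) (hcomm s t)

theorem commute_of_pow_three_dvd (hcomm : ∀ r s : R, c ∣ r * s - s * r)
    (hc : ∀ r : R, c ^ 2 ∣ r * c - c * r) (hsq : ∀ r : R, Commute r (c ^ 2)) (hc4 : c ^ 4 = 0)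
    {z : R} (hz : c ^ 3 ∣ z) (r : R) : Commute r z := by
  obtain ⟨m, rfl⟩ := hz
  have hcube : Commute r (c ^ 3) := by
    obtain ⟨w, hw⟩ := hc r
    rw [commute_iff_eq, ← sub_eq_zero]
    calc r * c ^ 3 - c ^ 3 * r = r * c * c ^ 2 - c * (c ^ 2 * r) := by
          rw [pow_succ' c 2]; noncomm_ring
      _ = (r * c - c * r) * c ^ 2 := by rw [← (hsq r).eq]; noncomm_ring
      _ = c ^ 4 * w := by rw [hw, mul_assoc, (hsq w).eq, ← mul_assoc, ← pow_add]
      _ = 0 := by rw [hc4, zero_mul]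
  obtain ⟨w, hw⟩ := hcomm m r
  have hm : c ^ 3 * (m * r) = c ^ 3 * (r * m) := by
    rw [← sub_eq_zero, ← mul_sub, hw, ← mul_assoc, ← pow_succ, hc4, zero_mul]
  rw [commute_iff_eq, ← mul_assoc, hcube.eq, mul_assoc, ← hm, mul_assoc]

theorem derivedSeries_units_two_le_center (hcomm : ∀ r s : R, c ∣ r * s - s * r)
    (hc : ∀ r : R, c ^ 2 ∣ r * c - c * r) (hsq : ∀ r : R, Commute r (c ^ 2)) (hc4 : c ^ 4 = 0) :
    derivedSeries Rˣ 2 ≤ Subgroup.center Rˣ := by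
  have hD := derivedSeries_one_le_unitsCongrOne (dvd_mul_left_of_sq_dvd_mul_sub_mul hc) hcomm
  rw [derivedSeries_succ, Subgroup.commutator_le]
  intro p hp q hq
  rw [Subgroup.mem_center_iff]
  intro r
  ext
  have h := commute_of_pow_three_dvd hcomm hc hsq hc4
    (pow_three_dvd_commutatorElement_sub_one hcomm hc (hD hp) (hD hq)) r
  simpa using (h.add_right (Commute.one_right _)).eq

end UnitsCommutator

section Adjoin

variable {k A : Type*} [CommSemiring k] [Ring A] [Algebra k A]

theorem dvd_mul_sub_mul_of_mem_adjoin {d b : A} {s : Set A} (hd : ∀ r : A, d ∣ r * d)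
    (hs : ∀ a ∈ s, d ∣ a * b - b * a) {r : A} (hr : r ∈ Algebra.adjoin k s) :
    d ∣ r * b - b * r := by
  induction hr using Algebra.adjoin_induction with
  | mem a ha => exact hs a ha
  | algebraMap t => rw [Algebra.commutes, sub_self]; exact dvd_zero d
  | add x y _ _ hx hy => rw [add_mul, mul_add, add_sub_add_comm]; exact dvd_add hx hy
  | mul x y _ _ hx hy =>
    obtain ⟨w, hw⟩ := hy
    have h : x * y * b - b * (x * y) = x * d * w + (x * b - b * x) * y := by
      rw [mul_assoc x d, ← hw]; noncomm_ring
    rw [h]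
    exact dvd_add ((hd x).mul_right w) (hx.mul_right y)

theorem dvd_mul_sub_mul_of_adjoin_eq_top {d : A} {s : Set A} (hs : Algebra.adjoin k s = ⊤)
    (hd : ∀ r : A, d ∣ r * d) (hgen : ∀ a ∈ s, ∀ b ∈ s, d ∣ a * b - b * a) (r t : A) :
    d ∣ r * t - t * r := by
  have hgen_left (u a : A) (ha : a ∈ s) : d ∣ u * a - a * u :=
    dvd_mul_sub_mul_of_mem_adjoin hd (fun b hb ↦ hgen b hb a ha) (hs ▸ Algebra.mem_top)
  exact dvd_mul_sub_mul_of_mem_adjoin hd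
    (fun a ha ↦ dvd_sub_comm.mp (hgen_left t a ha)) (hs ▸ Algebra.mem_top)

end Adjoin

theorem MonoidAlgebra.adjoin_image_of_eq_top {k G : Type*} [CommSemiring k] [Group G]
    {s : Set G} (hs : Subgroup.closure s = ⊤) (hfin : ∀ g ∈ s, IsOfFinOrder g) :
    Algebra.adjoin k (MonoidAlgebra.of k G '' s) = ⊤ := by
  have hmon : Submonoid.closure s = ⊤ := by
    rw [← Subgroup.closure_toSubmonoid_of_isOfFinOrder hfin, hs, Subgroup.top_toSubmonoid]
  rw [eq_top_iff]
  rintro f -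
  induction f using MonoidAlgebra.induction_on with
  | of g =>
    have hg : g ∈ Submonoid.closure s := hmon ▸ Submonoid.mem_top g
    induction hg using Submonoid.closure_induction with
    | mem g hg => exact Algebra.subset_adjoin ⟨g, hg, rfl⟩
    | one => rw [map_one]; exact one_mem _
    | mul g h _ _ hg hh => rw [map_mul]; exact mul_mem hg hh
  | add f g hf hg => exact add_mem hf hg
  | smul r f hf => exact Subalgebra.smul_mem _ hf r

instance MonoidAlgebra.charP {k G : Type*} [Field k] [Monoid G] (p : ℕ) [CharP k p] :
    CharP (MonoidAlgebra k G) p :=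
  charP_of_injective_algebraMap' k p

namespace QD16

def a : QD16 := PresentedGroup.of 0

def x : QD16 := PresentedGroup.of 1

theorem a_pow_eight : a ^ 8 = 1 := by
  have h := PresentedGroup.one_of_mem (rels := qdRels 4) (x := FreeGroup.of 0 ^ (2 ^ (4 - 1)))
    (by simp [qdRels])
  rw [map_pow] at h
  exact h

theorem x_sq : x ^ 2 = 1 := by
  have h := PresentedGroup.one_of_mem (rels := qdRels 4) (x := FreeGroup.of 1 ^ 2)
    (by simp [qdRels])
  rw [map_pow] at h
  exact h

theorem x_mul_a_mul_x : x * a * x = a ^ 3 := by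
  have h := PresentedGroup.one_of_mem (rels := qdRels 4) (x := FreeGroup.of 1 * FreeGroup.of 0 *
    FreeGroup.of 1 * (FreeGroup.of 0 ^ (2 ^ (4 - 2) - 1))⁻¹) (by simp [qdRels])
  rw [map_mul, map_inv, mul_inv_eq_one, map_pow] at h
  exact h

theorem x_mul_a : x * a = a ^ 3 * x := by
  rw [← x_mul_a_mul_x, mul_assoc, ← sq, x_sq, mul_one]

theorem closure_pair_eq_top : Subgroup.closure {a, x} = ⊤ :=
  eq_top_iff.2 fun g _ ↦ PresentedGroup.generated_by (qdRels 4) (Subgroup.closure {a, x})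
    (Fin.forall_fin_two.2 ⟨Subgroup.subset_closure (Set.mem_insert a {x}),
      Subgroup.subset_closure (Set.mem_insert_of_mem a rfl)⟩) g

theorem isOfFinOrder_of_mem_pair {g : QD16} (hg : g ∈ ({a, x} : Set QD16)) : IsOfFinOrder g := by
  rcases hg with rfl | rfl
  · exact isOfFinOrder_iff_pow_eq_one.2 ⟨8, by norm_num, a_pow_eight⟩
  · exact isOfFinOrder_iff_pow_eq_one.2 ⟨2, by norm_num, x_sq⟩

variable (F : Type*) [Field F]

local notation "α" => MonoidAlgebra.of F QD16 a
local notation "ξ" => MonoidAlgebra.of F QD16 x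

noncomputable def c : MonoidAlgebra F QD16 := 1 + α ^ 2

theorem adjoin_of_a_of_x : Algebra.adjoin F {α, ξ} = ⊤ := by
  simpa only [Set.image_pair] using
    MonoidAlgebra.adjoin_image_of_eq_top (k := F) closure_pair_eq_top
      fun _ ↦ isOfFinOrder_of_mem_pair

theorem of_a_pow_eight : α ^ 8 = 1 := by
  rw [← map_pow, a_pow_eight, map_one]

theorem semiconjBy_of_x_of_a : SemiconjBy ξ α (α ^ 3) := by
  rw [SemiconjBy, ← map_mul, ← map_pow, ← map_mul, x_mul_a]

variable [CharP F 2]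

theorem c_sq : c F ^ 2 = 1 + α ^ 4 := by
  rw [c, add_pow_char_of_commute (p := 2) (h := Commute.one_left _), one_pow, ← pow_mul]

theorem c_pow_four : c F ^ 4 = 0 := by
  rw [show 4 = 2 * 2 from rfl, pow_mul, c_sq,
    add_pow_char_of_commute (p := 2) (h := Commute.one_left _), one_pow, ← pow_mul,
    of_a_pow_eight, CharTwo.add_self_eq_zero]

theorem commute_c_sq (r : MonoidAlgebra F QD16) : Commute r (c F ^ 2) := by
  rw [c_sq]
  refine (Commute.one_right r).add_right
    (Algebra.commute_of_mem_adjoin_of_forall_mem_commute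
      (adjoin_of_a_of_x F ▸ Algebra.mem_top) ?_).symm
  rintro _ (rfl | rfl)
  · exact (Commute.refl _).pow_left 4
  · have h := (semiconjBy_of_x_of_a F).pow_right 4
    rw [← pow_mul, show 3 * 4 = 8 + 4 from rfl, pow_add, of_a_pow_eight, one_mul] at h
    exact h.symm

theorem c_sq_dvd_mul_c_sub_c_mul (r : MonoidAlgebra F QD16) :
    c F ^ 2 ∣ r * c F - c F * r := by
  refine dvd_mul_sub_mul_of_mem_adjoin (fun r ↦ ?_) ?_ (adjoin_of_a_of_x F ▸ Algebra.mem_top)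
  · rw [(commute_c_sq F r).eq]
    exact dvd_mul_right _ _
  rintro _ (rfl | rfl)
  · have h : Commute α (c F) := (Commute.one_right _).add_right ((Commute.refl _).pow_right 2)
    rw [h.eq, sub_self]
    exact dvd_zero _
  · have h : ξ * α ^ 2 = α ^ 6 * ξ := by
      rw [((semiconjBy_of_x_of_a F).pow_right 2).eq, ← pow_mul]
    refine ⟨α ^ 2 * ξ, ?_⟩
    calc ξ * c F - c F * ξ = α ^ 6 * ξ - α ^ 2 * ξ := by rw [c, mul_add, h]; noncomm_ring
      _ = (1 + α ^ 4) * (α ^ 2 * ξ) := by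
        rw [CharTwo.sub_eq_add, add_mul, one_mul, ← mul_assoc, ← pow_add, add_comm]
      _ = c F ^ 2 * (α ^ 2 * ξ) := by rw [c_sq]

theorem c_dvd_mul_sub_mul (r s : MonoidAlgebra F QD16) : c F ∣ r * s - s * r := by
  refine dvd_mul_sub_mul_of_adjoin_eq_top (adjoin_of_a_of_x F)
    (dvd_mul_left_of_sq_dvd_mul_sub_mul (c_sq_dvd_mul_c_sub_c_mul F)) ?_ r s
  have h : c F ∣ α * ξ - ξ * α := ⟨α * ξ, by
    rw [(semiconjBy_of_x_of_a F).eq, CharTwo.sub_eq_add, c, add_mul, one_mul, ← mul_assoc,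
      ← pow_succ]⟩
  rintro _ (rfl | rfl) _ (rfl | rfl)
  · rw [sub_self]; exact dvd_zero _
  · exact h
  · exact dvd_sub_comm.mp h
  · rw [sub_self]; exact dvd_zero _

end QD16

theorem unitGroup_centrallyMetabelian_QD16_general (F : Type) [Field F] [CharP F 2] :
    derivedSeries (MonoidAlgebra F QD16)ˣ 2 ≤ Subgroup.center (MonoidAlgebra F QD16)ˣ :=
  derivedSeries_units_two_le_center (QD16.c_dvd_mul_sub_mul F) (QD16.c_sq_dvd_mul_c_sub_c_mul F)
    (QD16.commute_c_sq F) (QD16.c_pow_four F)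

/-- The unit group of `F_q[QD_16]` in characteristic 2 is centrally metabelian:
its second derived subgroup is contained in its center. -/
theorem unitGroup_centrallyMetabelian_QD16 (F : Type) [Field F] [Fintype F] [CharP F 2]
    (n : ℕ) (hn : 0 < n) (hq : Fintype.card F = 2 ^ n) :
    derivedSeries (MonoidAlgebra F QD16)ˣ 2 ≤ Subgroup.center (MonoidAlgebra F QD16)ˣ :=
  unitGroup_centrallyMetabelian_QD16_general F
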